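/- With A, A_k, G_k, G as in the context: each G_k is Riemann integrable on [0,1]; 0 ≤ G_k(x) ≤ 1 for all x and k; G_k(x) → G(x) for every x ∈ ℝ; and for every function h : ℝ → ℝ with h = G volume-almost everywhere, h is NOT Riemann integrable on [0,1]. In particular, the pointwise limit G of the Riemann integrable functions G_k has no Riemann integrable representative in its a.e.-equivalence class. -/

import Mathlib

open MeasureTheory Filter Topology BoxIntegral

noncomputable def unitBox : BoxIntegral.Box (Fin 1) :=
  ⟨fun _ => 0, fun _ => 1, fun _ => one_pos⟩

/-- `f : ℝ → ℝ` is Riemann integrable on `[0,1]`, in the sense of Mathlib's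
box-integral theory with the Riemann integration parameters. -/
def RiemannIntegrableOn01 (f : ℝ → ℝ) : Prop :=
  BoxIntegral.Integrable unitBox BoxIntegral.IntegrationParams.Riemann
    (fun x => f (x 0)) (volume : Measure (Fin 1 → ℝ)).toBoxAdditive.toSMul

open Set

/-!
`G_k` is the indicator of a finite union of intervals, so it is bounded and continuous off a finite
set, hence Riemann integrable by Lebesgue's criterion.

For the last claim, `A` contains a relative neighbourhood in `[0,1]` of every rational, so it meets
every subinterval of `[0,1]` in positive measure, while `vol A ≤ ∑ ℓ / 2 ^ j = ℓ < 1`. Let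
`h = 1_A` a.e. be Riemann integrable. A fine partition of `[0,1]` can be tagged at points where
`h = 1`, giving the Riemann sum `1`; it can also be tagged at points where `h = 0` in every box
not contained in `A` up to a null set, giving a Riemann sum at most `vol A`. Both sums are close to
the integral, so `1 ≤ vol A`, a contradiction.
-/

theorem MeasureTheory.exists_mem_apply_eq_one_of_measure_inter_ne_zero {α : Type*}
    [MeasurableSpace α] {μ : Measure α} {f : α → ℝ} {s t N : Set α} (hN : μ N = 0)
    (hfN : ∀ x ∉ N, f x = s.indicator (fun _ => 1) x) (ht : μ (s ∩ t) ≠ 0) :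
    ∃ x ∈ t, f x = 1 := by
  obtain ⟨x, ⟨hxs, hxt⟩, hxN⟩ :=
    nonempty_of_measure_ne_zero (show μ ((s ∩ t) \ N) ≠ 0 by rwa [measure_sdiff_null hN])
  exact ⟨x, hxt, by rw [hfN x hxN, indicator_of_mem hxs]⟩

namespace BoxIntegral

variable {ι E F : Type*} [Fintype ι] [NormedAddCommGroup E] [NormedSpace ℝ E]
  [NormedAddCommGroup F] [NormedSpace ℝ F] {I : Box ι}

theorem Integrable.exists_isPartition_dist_sum_le {f : (ι → ℝ) → E} {vol : ι →ᵇᵃ (E →L[ℝ] F)}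
    (hf : Integrable I IntegrationParams.Riemann f vol) {ε : ℝ} (hε : 0 < ε) :
    ∃ π : Prepartition I, π.IsPartition ∧ ∀ t₁ t₂ : Box ι → ι → ℝ,
      (∀ J ∈ π, t₁ J ∈ Box.Icc J) → (∀ J ∈ π, t₂ J ∈ Box.Icc J) →
      dist (∑ J ∈ π.boxes, vol J (f (t₁ J))) (∑ J ∈ π.boxes, vol J (f (t₂ J))) ≤ 2 * ε := by
  classical
  set r := hf.convergenceR ε 1
  have hr : ∀ x, r x = r 0 := hf.convergenceR_cond ε 1 rfl
  obtain ⟨π, hπ, -, hπr, -⟩ := I.exists_taggedPartition_isHenstock_isSubordinate_homothetic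
    fun _ => ⟨r 0 / 2, mem_Ioi.2 (half_pos (r 0).2)⟩
  -- Moving the tags of `π` within their boxes keeps the partition `r`-subordinate,
  -- as every box has diameter at most `r 0`.
  have retag : ∀ t : Box ι → ι → ℝ, (∀ J ∈ π, t J ∈ Box.Icc J) →
      ∃ π' : TaggedPrepartition I, IntegrationParams.Riemann.MemBaseSet I 1 r π' ∧
        π'.iUnion = I ∧ integralSum f vol π' = ∑ J ∈ π.boxes, vol J (f (t J)) := by
    intro t ht
    refine ⟨⟨π.toPrepartition, fun J => if J ∈ π then t J else π.tag J, fun J => ?_⟩,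
      ⟨fun J hJ y hy => ?_, fun _ J hJ => ?_, nofun, nofun⟩, hπ.iUnion_eq, ?_⟩
    · split_ifs with hJ
      exacts [Box.le_iff_Icc.1 (π.le_of_mem hJ) (ht J hJ), π.tag_mem_Icc J]
    · simp only [if_pos (show J ∈ π from hJ), Metric.mem_closedBall, hr]
      calc dist y (t J) ≤ dist y (π.tag J) + dist (t J) (π.tag J) := dist_triangle_right _ _ _
        _ ≤ r 0 / 2 + r 0 / 2 := add_le_add (hπr J hJ hy) (hπr J hJ (ht J hJ))
        _ = r 0 := add_halves _
    · simpa only [if_pos (show J ∈ π from hJ)] using ht J hJ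
    · exact Finset.sum_congr rfl fun J hJ => by simp only [if_pos (show J ∈ π from hJ)]
  refine ⟨π.toPrepartition, hπ, fun t₁ t₂ ht₁ ht₂ => ?_⟩
  obtain ⟨π₁, hπ₁, hU₁, hsum₁⟩ := retag t₁ ht₁
  obtain ⟨π₂, hπ₂, hU₂, hsum₂⟩ := retag t₂ ht₂
  rw [← hsum₁, ← hsum₂, two_mul]
  exact hf.dist_integralSum_le_of_memBaseSet hε hε hπ₁ hπ₂ (hU₁.trans hU₂.symm)

section IndicatorAE

variable {μ : Measure (ι → ℝ)} [IsLocallyFiniteMeasure μ] {f : (ι → ℝ) → ℝ} {s N : Set (ι → ℝ)}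

theorem Prepartition.sum_measureReal_le (π : Prepartition I) {p : Box ι → Prop} [DecidablePred p]
    {u : Set (ι → ℝ)} (hu : μ u ≠ ⊤) (hpu : ∀ J ∈ π, p J → (J : Set (ι → ℝ)) ⊆ u) :
    ∑ J ∈ π.boxes with p J, μ.real J ≤ μ.real u := by
  rw [← measureReal_biUnion_finset
    (fun J hJ K hK => π.disjoint_coe_of_mem (Finset.mem_filter.1 hJ).1 (Finset.mem_filter.1 hK).1)
    (fun J _ => J.measurableSet_coe) (fun J _ => (J.measure_coe_lt_top μ).ne)]
  exact measureReal_mono (iUnion₂_subset fun J hJ => hpu J (Finset.mem_filter.1 hJ).1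
    (Finset.mem_filter.1 hJ).2) hu

theorem Prepartition.exists_tags_sum_eq_measureReal (π : Prepartition I) (hπ : π.IsPartition)
    (hN : μ N = 0) (hfN : ∀ x ∉ N, f x = s.indicator (fun _ => 1) x)
    (hs : ∀ J : Box ι, J ≤ I → μ (s ∩ J) ≠ 0) :
    ∃ t : Box ι → ι → ℝ, (∀ J ∈ π, t J ∈ Box.Icc J) ∧
      ∑ J ∈ π.boxes, μ.toBoxAdditive.toSMul J (f (t J)) = μ.real I := by
  choose! t ht hft using fun J (hJ : J ∈ π) =>
    exists_mem_apply_eq_one_of_measure_inter_ne_zero hN hfN (hs J (π.le_of_mem hJ))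
  refine ⟨t, fun J hJ => Box.coe_subset_Icc (ht J hJ), ?_⟩
  rw [← Measure.toBoxAdditive_apply, ← μ.toBoxAdditive.sum_partition_boxes le_top hπ]
  exact Finset.sum_congr rfl fun J hJ => by
    rw [BoxAdditiveMap.toSMul_apply, hft J hJ, smul_eq_mul, mul_one]

theorem Prepartition.exists_tags_sum_le_measureReal (π : Prepartition I)
    (hN : μ N = 0) (hfN : ∀ x ∉ N, f x = s.indicator (fun _ => 1) x)
    (hs : ∀ J : Box ι, J ≤ I → μ (s ∩ J) ≠ 0) :
    ∃ t : Box ι → ι → ℝ, (∀ J ∈ π, t J ∈ Box.Icc J) ∧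
      ∑ J ∈ π.boxes, μ.toBoxAdditive.toSMul J (f (t J)) ≤ μ.real (s ∩ I) := by
  classical
  have htag : ∀ J ∈ π, ∃ x ∈ Box.Icc J,
      μ.real J * f x ≤ if (J : Set (ι → ℝ)) ⊆ s ∪ N then μ.real J else 0 := by
    intro J hJ
    by_cases hJsN : (J : Set (ι → ℝ)) ⊆ s ∪ N
    · obtain ⟨x, hx, hfx⟩ :=
        exists_mem_apply_eq_one_of_measure_inter_ne_zero hN hfN (hs J (π.le_of_mem hJ))
      exact ⟨x, Box.coe_subset_Icc hx, by simp [hJsN, hfx]⟩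
    · obtain ⟨x, hxJ, hx⟩ := not_subset.1 hJsN
      rw [mem_union, not_or] at hx
      exact ⟨x, Box.coe_subset_Icc hxJ, by simp [hJsN, hfN x hx.2, hx.1]⟩
  choose! t ht hft using htag
  have hμsI : μ (s ∩ I) ≠ ⊤ :=
    ne_top_of_le_ne_top (I.measure_coe_lt_top μ).ne (measure_mono inter_subset_right)
  have hμN : μ (s ∩ I ∪ N) = μ (s ∩ I) :=
    measure_congr (union_ae_eq_left_of_ae_eq_empty (ae_eq_empty.2 hN))
  refine ⟨t, ht, ?_⟩
  calc ∑ J ∈ π.boxes, μ.toBoxAdditive.toSMul J (f (t J))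
      ≤ ∑ J ∈ π.boxes, if (J : Set (ι → ℝ)) ⊆ s ∪ N then μ.real J else 0 :=
        Finset.sum_le_sum fun J hJ => by
          simpa only [BoxAdditiveMap.toSMul_apply, Measure.toBoxAdditive_apply, smul_eq_mul]
            using hft J hJ
    _ = ∑ J ∈ π.boxes.filter fun J : Box ι => (J : Set (ι → ℝ)) ⊆ s ∪ N, μ.real J :=
        (Finset.sum_filter _ _).symm
    _ ≤ μ.real (s ∩ I ∪ N) := π.sum_measureReal_le (hμN ▸ hμsI) fun J hJ hJsN x hx =>
        (hJsN hx).imp (fun hxs => ⟨hxs, π.le_of_mem hJ hx⟩) id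
    _ = μ.real (s ∩ I) := by rw [measureReal_def, hμN, measureReal_def]

theorem Integrable.measure_le_of_ae_eq_indicator
    (hf : Integrable I IntegrationParams.Riemann f μ.toBoxAdditive.toSMul)
    (hfs : f =ᵐ[μ] s.indicator fun _ => 1) (hs : ∀ J : Box ι, J ≤ I → μ (s ∩ J) ≠ 0) :
    μ I ≤ μ (s ∩ I) := by
  obtain ⟨N, hN, hfN⟩ : ∃ N, μ N = 0 ∧ ∀ x ∉ N, f x = s.indicator (fun _ => 1) x :=
    ⟨_, ae_iff.1 hfs, fun x hx => not_not.1 hx⟩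
  have hμI : μ I ≠ ⊤ := (I.measure_coe_lt_top μ).ne
  rw [← ENNReal.toReal_le_toReal hμI (ne_top_of_le_ne_top hμI (measure_mono inter_subset_right)),
    ← measureReal_def, ← measureReal_def]
  refine le_of_forall_pos_le_add fun ε hε => ?_
  obtain ⟨π, hπ, hdist⟩ := hf.exists_isPartition_dist_sum_le (half_pos hε)
  obtain ⟨t₁, ht₁, hsum₁⟩ := π.exists_tags_sum_eq_measureReal hπ hN hfN hs
  obtain ⟨t₂, ht₂, hsum₂⟩ := π.exists_tags_sum_le_measureReal hN hfN hs
  have h := hdist t₁ t₂ ht₁ ht₂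
  rw [hsum₁, Real.dist_eq, mul_div_cancel₀ _ two_ne_zero] at h
  linarith [le_abs_self (μ.real I - ∑ J ∈ π.boxes, μ.toBoxAdditive.toSMul J (f (t₂ J)))]

end IndicatorAE

end BoxIntegral

theorem Set.Finite.frontier_biUnion_subset {X ι : Type*} [TopologicalSpace X] {s : Set ι}
    (hs : s.Finite) (t : ι → Set X) : frontier (⋃ i ∈ s, t i) ⊆ ⋃ i ∈ s, frontier (t i) := by
  rintro x ⟨hxc, hxi⟩
  rw [hs.closure_biUnion, mem_iUnion₂] at hxc
  obtain ⟨i, hi, hx⟩ := hxc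
  exact mem_iUnion₂.2 ⟨i, hi, hx, fun h => hxi (interior_mono (subset_biUnion_of_mem hi) h)⟩

theorem Real.finite_frontier_Icc_inter_Ioo (a b c d : ℝ) :
    (frontier (Icc a b ∩ Ioo c d)).Finite := by
  have hIcc : (frontier (Icc a b)).Finite := by
    rcases le_or_gt a b with hab | hab
    · simp [frontier_Icc hab]
    · simp [Icc_eq_empty_of_lt hab]
  have hIoo : (frontier (Ioo c d)).Finite := by
    rcases lt_or_ge c d with hcd | hcd
    · simp [frontier_Ioo hcd]
    · simp [Ioo_eq_empty_of_le hcd]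
  exact (hIcc.union hIoo).subset ((frontier_inter_subset _ _).trans
    (union_subset_union inter_subset_left inter_subset_right))

theorem measure_biUnion_le_of_le_div_two_pow {α : Type*} [MeasurableSpace α] (μ : Measure α)
    {s : ℕ → Set α} {c : ℝ} (hc : 0 ≤ c) (hs : ∀ j, 1 ≤ j → μ (s j) ≤ ENNReal.ofReal (c / 2 ^ j)) :
    μ (⋃ j ∈ {j : ℕ | 1 ≤ j}, s j) ≤ ENNReal.ofReal c := by
  have hunion : ⋃ j ∈ {j : ℕ | 1 ≤ j}, s j = ⋃ n, s (n + 1) := by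
    ext x
    simp only [mem_iUnion, mem_ofPred_eq, exists_prop]
    exact ⟨fun ⟨j, hj, hx⟩ => ⟨j - 1, by rwa [Nat.sub_add_cancel hj]⟩,
      fun ⟨n, hx⟩ => ⟨n + 1, Nat.le_add_left 1 n, hx⟩⟩
  have hgeom : ∀ n : ℕ, c / 2 ^ (n + 1) = c / 2 / 2 ^ n := fun n => by
    rw [pow_succ', div_div]
  calc μ (⋃ j ∈ {j : ℕ | 1 ≤ j}, s j) ≤ ∑' n, μ (s (n + 1)) := hunion ▸ measure_iUnion_le _
    _ ≤ ∑' n : ℕ, ENNReal.ofReal (c / 2 / 2 ^ n) :=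
      ENNReal.tsum_le_tsum fun n => hgeom n ▸ hs (n + 1) (Nat.le_add_left 1 n)
    _ = ENNReal.ofReal c := by
      rw [← ENNReal.ofReal_tsum_of_nonneg (fun n => by positivity)
        (summable_geometric_two' c), tsum_geometric_two']

theorem tendsto_indicator_biUnion_Icc_one {α β : Type*} [Zero β] [TopologicalSpace β]
    (t : ℕ → Set α) (g : α → β) (x : α) :
    Tendsto (fun k => (⋃ j ∈ Icc 1 k, t j).indicator g x) atTop
      (𝓝 ((⋃ j ∈ {j : ℕ | 1 ≤ j}, t j).indicator g x)) := by
  have hmono : Monotone fun k => ⋃ j ∈ Icc 1 k, t j := fun k k' hkk' =>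
    biUnion_subset_biUnion_left (Icc_subset_Icc_right hkk')
  have hunion : ⋃ k, ⋃ j ∈ Icc 1 k, t j = ⋃ j ∈ {j : ℕ | 1 ≤ j}, t j := by
    ext x
    simp only [mem_iUnion, mem_Icc, mem_ofPred_eq, exists_prop]
    exact ⟨fun ⟨_, j, hj, hx⟩ => ⟨j, hj.1, hx⟩, fun ⟨j, hj, hx⟩ => ⟨j, j, ⟨hj, le_rfl⟩, hx⟩⟩
  rw [← hunion]
  exact (hmono.tendsto_indicator _ g x).mono_right (pure_le_nhds _)

theorem Real.volume_inter_Ioc_ne_zero_of_forall_rat {s : Set ℝ}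
    (hs : ∀ r : ℚ, (r : ℝ) ∈ Icc 0 1 → ∃ d : ℝ, 0 < d ∧ Icc 0 1 ∩ Ioo (r - d) (r + d) ⊆ s)
    {a b : ℝ} (ha : 0 ≤ a) (hab : a < b) (hb : b ≤ 1) : volume (s ∩ Ioc a b) ≠ 0 := by
  obtain ⟨r, har, hrb⟩ := exists_rat_btwn hab
  obtain ⟨d, hd, hds⟩ := hs r ⟨ha.trans har.le, hrb.le.trans hb⟩
  have hsub : Ioo a b ∩ Ioo (r - d) (r + d) ⊆ s ∩ Ioc a b := fun x ⟨hxab, hxr⟩ =>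
    ⟨hds ⟨⟨ha.trans hxab.1.le, hxab.2.le.trans hb⟩, hxr⟩, Ioo_subset_Ioc_self hxab⟩
  exact fun h => (isOpen_Ioo.inter isOpen_Ioo).measure_ne_zero volume
    ⟨(r : ℝ), ⟨har, hrb⟩, by linarith, by linarith⟩ (measure_mono_null hsub h)

theorem coe_box_fin_one (J : Box (Fin 1)) :
    (J : Set (Fin 1 → ℝ)) = (fun x => x 0) ⁻¹' Ioc (J.lower 0) (J.upper 0) := by
  ext x
  simp [Box.mem_coe, Box.mem_def, Fin.forall_fin_one]

theorem measurePreserving_eval_zero :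
    MeasurePreserving (fun x : Fin 1 → ℝ => x 0) volume volume :=
  volume_preserving_funUnique (Fin 1) ℝ

theorem volume_preimage_eval_zero (s : Set ℝ) :
    volume ((fun x : Fin 1 → ℝ => x 0) ⁻¹' s) = volume s :=
  (volume_preserving_funUnique (Fin 1) ℝ).measure_preimage_equiv s

theorem riemannIntegrableOn01_indicator {s : Set ℝ} (hs : volume (frontier s) = 0) :
    RiemannIntegrableOn01 (s.indicator fun _ => 1) := by
  refine integrable_of_bounded_and_ae_continuous IntegrationParams.Riemann
    (f := fun x : Fin 1 → ℝ => s.indicator (fun _ => (1 : ℝ)) (x 0)) ⟨1, fun x _ => ?_⟩ volume ?_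
  · by_cases hx : x 0 ∈ s <;> simp [hx]
  · filter_upwards [measurePreserving_eval_zero.quasiMeasurePreserving.ae
      (measure_eq_zero_iff_ae_notMem.1 hs)] with x hx
    exact (continuousOn_const.continuousAt_indicator hx).comp (f := fun y : Fin 1 → ℝ => y 0)
      (continuous_apply 0).continuousAt

theorem RiemannIntegrableOn01.one_le_volume_of_ae_eq_indicator {h : ℝ → ℝ} {s : Set ℝ}
    (hh : RiemannIntegrableOn01 h) (hhs : h =ᵐ[volume] s.indicator fun _ => 1)
    (hs : ∀ a b, 0 ≤ a → a < b → b ≤ 1 → volume (s ∩ Ioc a b) ≠ 0) :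
    1 ≤ volume (s ∩ Ioc 0 1) := by
  have key := hh.measure_le_of_ae_eq_indicator (s := (fun x : Fin 1 → ℝ => x 0) ⁻¹' s)
    (measurePreserving_eval_zero.quasiMeasurePreserving.ae_eq_comp hhs) fun J hJ => by
      rw [coe_box_fin_one, ← preimage_inter, volume_preimage_eval_zero]
      rw [Box.le_iff_bounds] at hJ
      exact hs _ _ (hJ.1 0) (J.lower_lt_upper 0) (hJ.2 0)
  rw [coe_box_fin_one, ← preimage_inter, volume_preimage_eval_zero,
    volume_preimage_eval_zero] at key
  simpa [unitBox] using key

theorem stmt13 (q : ℕ → ℝ)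
    (hq : Set.BijOn q {n : ℕ | 1 ≤ n} (Set.Icc (0:ℝ) 1 ∩ Set.range ((↑) : ℚ → ℝ)))
    (ℓ : ℝ) (hℓ : ℓ ∈ Set.Ioo (0:ℝ) 1)
    (I : ℕ → Set ℝ)
    (hI : ∀ j, I j = Set.Icc (0:ℝ) 1 ∩ Set.Ioo (q j - ℓ / 2 ^ (j + 1)) (q j + ℓ / 2 ^ (j + 1)))
    (Ak : ℕ → Set ℝ) (hAk : ∀ k, Ak k = ⋃ j ∈ Set.Icc 1 k, I j)
    (A : Set ℝ) (hA : A = ⋃ j ∈ {j : ℕ | 1 ≤ j}, I j)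
    (Gk : ℕ → ℝ → ℝ) (hGk : ∀ k, Gk k = Set.indicator (Ak k) (fun _ => (1:ℝ)))
    (G : ℝ → ℝ) (hG : G = Set.indicator A (fun _ => (1:ℝ))) :
    (∀ k, RiemannIntegrableOn01 (Gk k)) ∧
    (∀ k x, 0 ≤ Gk k x ∧ Gk k x ≤ 1) ∧
    (∀ x, Tendsto (fun k => Gk k x) atTop (𝓝 (G x))) ∧
    (∀ h : ℝ → ℝ, h =ᵐ[volume] G → ¬ RiemannIntegrableOn01 h) := by
  have hvolA : volume A ≤ ENNReal.ofReal ℓ := by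
    refine hA ▸ measure_biUnion_le_of_le_div_two_pow volume hℓ.1.le fun j _ => ?_
    rw [hI]
    refine (measure_mono inter_subset_right).trans_eq ?_
    rw [Real.volume_Ioo, pow_succ]
    congr 1
    ring
  have hdense : ∀ r : ℚ, (r : ℝ) ∈ Icc 0 1 →
      ∃ d : ℝ, 0 < d ∧ Icc 0 1 ∩ Ioo (r - d) (r + d) ⊆ A := by
    intro r hr
    obtain ⟨j, hj, hjr⟩ := hq.surjOn ⟨hr, r, rfl⟩
    refine ⟨ℓ / 2 ^ (j + 1), by have := hℓ.1; positivity, ?_⟩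
    rw [← hjr, ← hI, hA]
    exact subset_biUnion_of_mem (u := I) hj
  refine ⟨fun k => ?_, fun k x => ?_, fun x => ?_, fun h hh hint => ?_⟩
  · rw [hGk, hAk]
    refine riemannIntegrableOn01_indicator <| Set.Finite.measure_zero (((finite_Icc 1 k).biUnion
      fun j _ => ?_).subset ((finite_Icc 1 k).frontier_biUnion_subset I)) volume
    exact hI j ▸ Real.finite_frontier_Icc_inter_Ioo _ _ _ _
  · rw [hGk]
    by_cases hx : x ∈ Ak k <;> simp [hx]
  · simpa only [hGk, hAk, hG, hA] using tendsto_indicator_biUnion_Icc_one I (fun _ => (1 : ℝ)) x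
  · have hA1 := hint.one_le_volume_of_ae_eq_indicator (hG ▸ hh)
      fun a b ha hab hb => Real.volume_inter_Ioc_ne_zero_of_forall_rat hdense ha hab hb
    exact hA1.not_gt ((measure_mono inter_subset_left).trans_lt
      (hvolA.trans_lt (ENNReal.ofReal_lt_one.2 hℓ.2)))
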